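/- arXiv:1903.09780 — 6 statements merged into one kernel-verified Lean document; each statement's English description precedes it below -/
import Mathlib

section
/- For any ε ∈ [-1,1], the function x ↦ sinh(x) / ((ε + cosh(x)) · x) is strictly monotone decreasing on (0, ∞). -/
/-!
Write `D x = (ε + cosh x) x`. By `cosh² - sinh² = 1`, the numerator of the derivative of
`sinh x / D x` simplifies to `ε (x cosh x - sinh x) + x - sinh x cosh x`. Since
`x cosh x - sinh x > 0`, this is largest at `ε = 1`, where it factors as
`(x - sinh x)(1 + cosh x) < 0`.
-/

open Real Set

lemma Real.sinh_lt_mul_cosh {x : ℝ} (hx : 0 < x) : sinh x < x * cosh x := by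
  have hmono : StrictMonoOn (fun x : ℝ => x * cosh x - sinh x) (Ici 0) := by
    refine strictMonoOn_of_deriv_pos (convex_Ici 0) (by fun_prop) fun y hy => ?_
    rw [interior_Ici, mem_Ioi] at hy
    have hderiv : HasDerivAt (fun x : ℝ => x * cosh x - sinh x)
        (1 * cosh y + y * sinh y - cosh y) y :=
      ((hasDerivAt_id y).mul (hasDerivAt_cosh y)).sub (hasDerivAt_sinh y)
    rw [hderiv.deriv]
    nlinarith [mul_pos hy (sinh_pos_iff.2 hy)]
  simpa using hmono self_mem_Ici hx.le hx

lemma Real.add_cosh_mul_pos {ε x : ℝ} (hε : -1 ≤ ε) (hx : 0 < x) : 0 < (ε + cosh x) * x :=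
  mul_pos (by linarith [one_lt_cosh.2 hx.ne']) hx

lemma Real.hasDerivAt_sinh_div_add_cosh_mul (ε : ℝ) {x : ℝ} (hx : (ε + cosh x) * x ≠ 0) :
    HasDerivAt (fun x => sinh x / ((ε + cosh x) * x))
      ((ε * (x * cosh x - sinh x) + x - sinh x * cosh x) / ((ε + cosh x) * x) ^ 2) x := by
  have hD : HasDerivAt (fun x => (ε + cosh x) * x) ((0 + sinh x) * x + (ε + cosh x) * 1) x :=
    ((hasDerivAt_const x ε).add (hasDerivAt_cosh x)).mul (hasDerivAt_id x)
  refine ((hasDerivAt_sinh x).div hD hx).congr_deriv ?_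
  congr 1
  linear_combination x * cosh_sq_sub_sinh_sq x

lemma Real.add_mul_sub_sinh_mul_cosh_neg {ε x : ℝ} (hε : ε ≤ 1) (hx : 0 < x) :
    ε * (x * cosh x - sinh x) + x - sinh x * cosh x < 0 := by
  have hgap : 0 ≤ x * cosh x - sinh x := (sub_pos.2 (sinh_lt_mul_cosh hx)).le
  calc ε * (x * cosh x - sinh x) + x - sinh x * cosh x
      ≤ 1 * (x * cosh x - sinh x) + x - sinh x * cosh x := by gcongr
    _ = (x - sinh x) * (1 + cosh x) := by ring
    _ < 0 := mul_neg_of_neg_of_pos (sub_neg.2 (self_lt_sinh_iff.2 hx)) (by positivity)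

/-- For any ε ∈ [-1,1], the function x ↦ sinh x / ((ε + cosh x) · x) is strictly
monotone decreasing on (0, ∞). -/
theorem stmt_0 (ε : ℝ) (hε : ε ∈ Set.Icc (-1 : ℝ) 1) :
    StrictAntiOn (fun x : ℝ => Real.sinh x / ((ε + Real.cosh x) * x)) (Set.Ioi 0) := by
  obtain ⟨hε_low, hε_high⟩ := hε
  refine strictAntiOn_of_deriv_neg (convex_Ioi 0) ?_ fun x hx => ?_
  · exact ContinuousOn.div (by fun_prop) (by fun_prop)
      fun x hx => (add_cosh_mul_pos hε_low hx).ne'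
  · rw [interior_Ioi] at hx
    have hD := add_cosh_mul_pos hε_low hx
    rw [(hasDerivAt_sinh_div_add_cosh_mul ε hD.ne').deriv]
    exact div_neg_of_neg_of_pos (add_mul_sub_sinh_mul_cosh_neg hε_high hx) (by positivity)
end

section
/- For all x ≥ 0 and t ≥ 0, (1/(2π)) ∫₀^{2π} 1/(1 + x·(t·(cos k + 1) + 1)²) dk = (((2t+1)²x+1)^{1/2} + (x+1)^{1/2}) / (√2 · (x+1)^{1/2} · ((2t+1)²x+1)^{1/2} · ((x+1)^{1/2}·((2t+1)²x+1)^{1/2} + (2t+1)x + 1)^{1/2}). -/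
/-!
Symmetry about `π` and the Weierstrass substitution `k = 2 arctan u` turn the integral into
`4 ∫₀^∞ (1 + u²) / (α u⁴ + β u² + γ) du` with `α = x + 1`, `β = 2 + 2x(2t + 1)`,
`γ = (2t + 1)²x + 1`. Since `4αγ - β² = 16xt²`, for `xt > 0` the quartic factors over `ℝ` as
`α (u² + pu + q)(u² - pu + q)` with `q = √(γ/α)` and `r² + p² = 4q` for some `p, r > 0`; partial
fractions then give an antiderivative built from `arctan ((2u ± p)/r)` and the logarithm of the
ratio of the two quadratics, which vanishes at `0` and tends to `π(1 + q)/(2qr)`. When `xt = 0`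
the integrand is constant.
-/

open Real MeasureTheory Set Filter Topology

section Weierstrass

variable {E : Type*} [NormedAddCommGroup E] [NormedSpace ℝ E]

theorem integral_comp_cos_zero_two_pi {g : ℝ → E} (hg : Continuous g) :
    ∫ k in (0 : ℝ)..2 * π, g (cos k) = (2 : ℝ) • ∫ k in (0 : ℝ)..π, g (cos k) := by
  have hint : ∀ a b : ℝ, IntervalIntegrable (fun k => g (cos k)) volume a b := fun a b =>
    (hg.comp continuous_cos).intervalIntegrable a b
  have hreflect : ∫ k in π..2 * π, g (cos k) = ∫ k in (0 : ℝ)..π, g (cos k) := by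
    simpa [cos_sub, two_mul] using (intervalIntegral.integral_comp_sub_left
      (fun k => g (cos k)) (a := 0) (b := π) (2 * π)).symm
  rw [← intervalIntegral.integral_add_adjacent_intervals (hint 0 π) (hint π (2 * π)), hreflect,
    two_smul]

theorem image_two_mul_arctan_Ioi : (fun u => 2 * arctan u) '' Ioi 0 = Ioo 0 π := by
  ext k
  constructor
  · rintro ⟨u, hu, rfl⟩
    have hlt := arctan_lt_pi_div_two u
    have hpos : 0 < arctan u := by simpa using arctan_strictMono (mem_Ioi.mp hu)
    constructor <;> linarith
  · rintro ⟨hk0, hkπ⟩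
    refine ⟨tan (k / 2), tan_pos_of_pos_of_lt_pi_div_two (by linarith) (by linarith), ?_⟩
    simp only
    rw [arctan_tan (by linarith) (by linarith)]
    ring

theorem cos_two_mul_arctan (u : ℝ) : cos (2 * arctan u) = (1 - u ^ 2) / (1 + u ^ 2) := by
  rw [cos_two_mul, cos_sq_arctan]
  field_simp
  ring

theorem integral_comp_cos_zero_pi (g : ℝ → E) :
    ∫ k in (0 : ℝ)..π, g (cos k) =
      ∫ u in Ioi 0, (2 / (1 + u ^ 2)) • g ((1 - u ^ 2) / (1 + u ^ 2)) := by
  have hderiv (u : ℝ) : HasDerivAt (fun u => 2 * arctan u) (2 / (1 + u ^ 2)) u := by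
    simpa [div_eq_mul_inv] using (hasDerivAt_arctan u).const_mul 2
  have hinj : InjOn (fun u => 2 * arctan u) (Ioi 0) := fun a _ b _ h =>
    arctan_injective (mul_left_cancel₀ two_ne_zero h)
  rw [intervalIntegral.integral_of_le pi_pos.le, integral_Ioc_eq_integral_Ioo,
    ← image_two_mul_arctan_Ioi,
    integral_image_eq_integral_abs_deriv_smul measurableSet_Ioi
      (fun u _ => (hderiv u).hasDerivWithinAt) hinj]
  refine setIntegral_congr_fun measurableSet_Ioi fun u _ => ?_
  simp only [cos_two_mul_arctan, abs_of_pos (by positivity : (0 : ℝ) < 2 / (1 + u ^ 2))]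

end Weierstrass

section QuarticIntegral

variable {p q r : ℝ}

theorem sq_add_mul_add_pos (hr : r ≠ 0) (hrp : r ^ 2 + p ^ 2 = 4 * q) (u : ℝ) :
    0 < u ^ 2 + p * u + q := by
  nlinarith [sq_nonneg (2 * u + p), sq_pos_of_ne_zero hr]

theorem sq_sub_mul_add_pos (hr : r ≠ 0) (hrp : r ^ 2 + p ^ 2 = 4 * q) (u : ℝ) :
    0 < u ^ 2 - p * u + q := by
  nlinarith [sq_nonneg (2 * u - p), sq_pos_of_ne_zero hr]

theorem hasDerivAt_arctan_add_arctan (hr : r ≠ 0) (hrp : r ^ 2 + p ^ 2 = 4 * q) (u : ℝ) :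
    HasDerivAt (fun u => arctan ((2 * u + p) / r) + arctan ((2 * u - p) / r))
      (r * (u ^ 2 + q) / ((u ^ 2 + p * u + q) * (u ^ 2 - p * u + q))) u := by
  have hlin (s : ℝ) : HasDerivAt (fun u => (2 * u + s) / r) (2 / r) u := by
    simpa using (((hasDerivAt_id u).const_mul 2).add_const s).div_const r
  have h := ((hlin p).arctan).add ((hlin (-p)).arctan)
  simp only [← sub_eq_add_neg] at h
  refine h.congr_deriv ?_
  have hu := sq_add_mul_add_pos hr hrp u
  have hv := sq_sub_mul_add_pos hr hrp u
  have h1 : 1 + ((2 * u + p) / r) ^ 2 = 4 * (u ^ 2 + p * u + q) / r ^ 2 := by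
    field_simp
    linear_combination hrp
  have h2 : 1 + ((2 * u - p) / r) ^ 2 = 4 * (u ^ 2 - p * u + q) / r ^ 2 := by
    field_simp
    linear_combination hrp
  have hsum : u ^ 2 + q = ((u ^ 2 + p * u + q) + (u ^ 2 - p * u + q)) / 2 := by ring
  rw [h1, h2, hsum]
  generalize u ^ 2 + p * u + q = A at hu ⊢
  generalize u ^ 2 - p * u + q = B at hv ⊢
  field_simp
  ring

theorem hasDerivAt_log_sub_log (hr : r ≠ 0) (hrp : r ^ 2 + p ^ 2 = 4 * q) (u : ℝ) :
    HasDerivAt (fun u => log (u ^ 2 + p * u + q) - log (u ^ 2 - p * u + q))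
      (-2 * p * (u ^ 2 - q) / ((u ^ 2 + p * u + q) * (u ^ 2 - p * u + q))) u := by
  have hu := sq_add_mul_add_pos hr hrp u
  have hv := sq_sub_mul_add_pos hr hrp u
  have hA : HasDerivAt (fun u => u ^ 2 + p * u + q) (2 * u + p) u := by
    simpa using ((hasDerivAt_pow 2 u).add ((hasDerivAt_id u).const_mul p)).add_const q
  have hB : HasDerivAt (fun u => u ^ 2 - p * u + q) (2 * u - p) u := by
    simpa using ((hasDerivAt_pow 2 u).sub ((hasDerivAt_id u).const_mul p)).add_const q
  refine ((hA.log hu.ne').sub (hB.log hv.ne')).congr_deriv ?_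
  rw [div_sub_div _ _ hu.ne' hv.ne']
  ring

theorem tendsto_arctan_add_arctan_atTop (hr : 0 < r) :
    Tendsto (fun u => arctan ((2 * u + p) / r) + arctan ((2 * u - p) / r)) atTop (𝓝 π) := by
  have hlin (s : ℝ) : Tendsto (fun u => arctan ((2 * u + s) / r)) atTop (𝓝 (π / 2)) :=
    (tendsto_arctan_atTop.mono_right nhdsWithin_le_nhds).comp <|
      (tendsto_atTop_add_const_right _ s (tendsto_id.const_mul_atTop two_pos)).atTop_div_const hr
  simpa [← sub_eq_add_neg] using (hlin p).add (hlin (-p))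

theorem tendsto_log_sub_log_atTop (hr : r ≠ 0) (hrp : r ^ 2 + p ^ 2 = 4 * q) :
    Tendsto (fun u => log (u ^ 2 + p * u + q) - log (u ^ 2 - p * u + q)) atTop (𝓝 0) := by
  set φ : ℝ → ℝ := fun v => log (1 + p * v + q * v ^ 2) - log (1 - p * v + q * v ^ 2)
  have hφ : Tendsto (fun u => φ u⁻¹) atTop (𝓝 0) := by
    have hcont : ContinuousAt φ 0 := by fun_prop (disch := simp)
    have h := hcont.tendsto.comp tendsto_inv_atTop_zero
    rwa [show φ 0 = 0 by simp [φ]] at h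
  refine hφ.congr' ?_
  filter_upwards [eventually_gt_atTop 0] with u hu0
  have hu := sq_add_mul_add_pos hr hrp u
  have hv := sq_sub_mul_add_pos hr hrp u
  have hscale_add : 1 + p * u⁻¹ + q * u⁻¹ ^ 2 = (u ^ 2 + p * u + q) / u ^ 2 := by field_simp
  have hscale_sub : 1 - p * u⁻¹ + q * u⁻¹ ^ 2 = (u ^ 2 - p * u + q) / u ^ 2 := by field_simp
  have hu2 : u ^ 2 ≠ 0 := by positivity
  simp only [φ, hscale_add, hscale_sub, log_div hu.ne' hu2, log_div hv.ne' hu2]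
  ring

theorem integral_Ioi_one_add_sq_div_mul (hp : 0 < p) (hr : 0 < r) (hrp : r ^ 2 + p ^ 2 = 4 * q) :
    ∫ u in Ioi 0, (1 + u ^ 2) / ((u ^ 2 + p * u + q) * (u ^ 2 - p * u + q)) =
      π * (1 + q) / (2 * q * r) := by
  have hq : 0 < q := by nlinarith
  set F : ℝ → ℝ := fun u =>
    (1 + q) / (2 * q * r) * (arctan ((2 * u + p) / r) + arctan ((2 * u - p) / r)) +
      (1 - q) / (4 * p * q) * (log (u ^ 2 + p * u + q) - log (u ^ 2 - p * u + q))
  have hderiv (u : ℝ) :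
      HasDerivAt F ((1 + u ^ 2) / ((u ^ 2 + p * u + q) * (u ^ 2 - p * u + q))) u := by
    refine (((hasDerivAt_arctan_add_arctan hr.ne' hrp u).const_mul _).add
      ((hasDerivAt_log_sub_log hr.ne' hrp u).const_mul _)).congr_deriv ?_
    field_simp
    ring
  have hlim : Tendsto F atTop (𝓝 (π * (1 + q) / (2 * q * r))) := by
    convert ((tendsto_arctan_add_arctan_atTop hr).const_mul ((1 + q) / (2 * q * r))).add
      ((tendsto_log_sub_log_atTop hr.ne' hrp).const_mul ((1 - q) / (4 * p * q))) using 2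
    ring
  have hnonneg (u : ℝ) : 0 ≤ (1 + u ^ 2) / ((u ^ 2 + p * u + q) * (u ^ 2 - p * u + q)) := by
    have hu := sq_add_mul_add_pos hr.ne' hrp u
    have hv := sq_sub_mul_add_pos hr.ne' hrp u
    positivity
  have hF0 : F 0 = 0 := by simp [F, neg_div, arctan_neg]
  rw [integral_Ioi_of_hasDerivAt_of_nonneg' (fun u _ => hderiv u) (fun u _ => hnonneg u) hlim,
    hF0, sub_zero]

theorem integral_Ioi_one_add_sq_div_quartic {α β γ : ℝ} (hα : 0 < α) (hβ : β ^ 2 < 4 * α * γ) :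
    ∫ u in Ioi 0, (1 + u ^ 2) / (α * u ^ 4 + β * u ^ 2 + γ) =
      π * (√α + √γ) / (2 * √α * √γ * √(2 * √α * √γ + β)) := by
  have hγ : 0 < γ := by nlinarith [sq_nonneg β]
  set a := √α
  set c := √γ
  have ha : 0 < a := sqrt_pos.mpr hα
  have hc : 0 < c := sqrt_pos.mpr hγ
  have haa : a ^ 2 = α := sq_sqrt hα.le
  have hcc : c ^ 2 = γ := sq_sqrt hγ.le
  obtain ⟨hlo, hhi⟩ := abs_lt.mp <|
    abs_lt_of_sq_lt_sq (by nlinarith : β ^ 2 < (2 * a * c) ^ 2) (by positivity)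
  obtain ⟨p, hp, hp2⟩ : ∃ p > 0, p ^ 2 * a ^ 2 = 2 * a * c - β :=
    ⟨√(2 * a * c - β) / a, div_pos (sqrt_pos.mpr (by linarith)) ha, by
      rw [div_pow, sq_sqrt (by linarith)]
      field_simp⟩
  obtain ⟨r, hr, hra⟩ : ∃ r > 0, r * a = √(2 * a * c + β) :=
    ⟨√(2 * a * c + β) / a, div_pos (sqrt_pos.mpr (by linarith)) ha, by field_simp⟩
  have hr2 : r ^ 2 * a ^ 2 = 2 * a * c + β := by
    rw [← mul_pow, hra, sq_sqrt (by linarith)]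
  have hrp : r ^ 2 + p ^ 2 = 4 * (c / a) := by
    rw [mul_div_assoc', eq_div_iff ha.ne']
    exact mul_right_cancel₀ ha.ne' (by linear_combination hr2 + hp2)
  have hfactor (u : ℝ) :
      α * u ^ 4 + β * u ^ 2 + γ = α * ((u ^ 2 + p * u + c / a) * (u ^ 2 - p * u + c / a)) := by
    rw [← haa, ← hcc]
    field_simp
    linear_combination u ^ 2 * hp2
  calc ∫ u in Ioi 0, (1 + u ^ 2) / (α * u ^ 4 + β * u ^ 2 + γ)
      = ∫ u in Ioi 0,
          α⁻¹ * ((1 + u ^ 2) / ((u ^ 2 + p * u + c / a) * (u ^ 2 - p * u + c / a))) := by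
        refine setIntegral_congr_fun measurableSet_Ioi fun u _ => ?_
        rw [hfactor, div_mul_eq_div_div_swap, div_eq_inv_mul]
    _ = α⁻¹ * (π * (1 + c / a) / (2 * (c / a) * r)) := by
        rw [integral_const_mul, integral_Ioi_one_add_sq_div_mul hp hr hrp]
    _ = π * (a + c) / (2 * a * c * √(2 * a * c + β)) := by
        rw [← haa, ← hra]
        field_simp

end QuarticIntegral

section CosineIntegral

variable {x t : ℝ}

theorem integral_one_div_one_add_mul_sq_cos_of_mul_eq_zero (hxt : x * t = 0) :
    ∫ k in (0 : ℝ)..2 * π, 1 / (1 + x * (t * (cos k + 1) + 1) ^ 2) = 2 * π / (x + 1) := by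
  have hden (k : ℝ) : 1 + x * (t * (cos k + 1) + 1) ^ 2 = x + 1 := by
    linear_combination (t * (cos k + 1) ^ 2 + 2 * (cos k + 1)) * hxt
  simp only [hden, intervalIntegral.integral_const, smul_eq_mul, sub_zero]
  ring

theorem integral_one_div_one_add_mul_sq_cos_of_mul_pos (hx : 0 ≤ x) (hxt : 0 < x * t) :
    ∫ k in (0 : ℝ)..2 * π, 1 / (1 + x * (t * (cos k + 1) + 1) ^ 2) =
      2 * π * (√(x + 1) + √((2 * t + 1) ^ 2 * x + 1)) /
        (√(x + 1) * √((2 * t + 1) ^ 2 * x + 1) *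
          √(2 * √(x + 1) * √((2 * t + 1) ^ 2 * x + 1) + (2 + 2 * x * (2 * t + 1)))) := by
  have hα : 0 < x + 1 := by linarith
  have ht : 0 < t := pos_of_mul_pos_right hxt hx
  have hβ : (2 + 2 * x * (2 * t + 1)) ^ 2 < 4 * (x + 1) * ((2 * t + 1) ^ 2 * x + 1) := by
    nlinarith [mul_pos hxt ht]
  set g : ℝ → ℝ := fun c => 1 / (1 + x * (t * (c + 1) + 1) ^ 2)
  have hg : Continuous g := continuous_const.div (by fun_prop) fun c => by positivity
  have hweierstrass (u : ℝ) : 2 / (1 + u ^ 2) * g ((1 - u ^ 2) / (1 + u ^ 2)) =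
      2 * ((1 + u ^ 2) /
        ((x + 1) * u ^ 4 + (2 + 2 * x * (2 * t + 1)) * u ^ 2 + ((2 * t + 1) ^ 2 * x + 1))) := by
    simp only [g]
    field_simp
    ring
  change ∫ k in (0 : ℝ)..2 * π, g (cos k) = _
  rw [integral_comp_cos_zero_two_pi hg, integral_comp_cos_zero_pi]
  simp only [smul_eq_mul, hweierstrass]
  rw [integral_const_mul, integral_Ioi_one_add_sq_div_quartic hα hβ]
  field_simp

end CosineIntegral

/-- For x ≥ 0 and t ≥ 0,
(1/(2π)) ∫₀^{2π} dk /(1 + x(t(cos k + 1) + 1)²)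
 = (√((2t+1)²x+1) + √(x+1)) / (√2 √(x+1) √((2t+1)²x+1) √(√(x+1)√((2t+1)²x+1)+(2t+1)x+1)). -/
theorem stmt_4 (x t : ℝ) (hx : 0 ≤ x) (ht : 0 ≤ t) :
    (1 / (2 * Real.pi)) * ∫ k in (0 : ℝ)..(2 * Real.pi),
        1 / (1 + x * (t * (Real.cos k + 1) + 1) ^ 2)
      = (Real.sqrt ((2 * t + 1) ^ 2 * x + 1) + Real.sqrt (x + 1)) /
        (Real.sqrt 2 * Real.sqrt (x + 1) * Real.sqrt ((2 * t + 1) ^ 2 * x + 1) *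
          Real.sqrt (Real.sqrt (x + 1) * Real.sqrt ((2 * t + 1) ^ 2 * x + 1)
            + (2 * t + 1) * x + 1)) := by
  have hα : 0 < x + 1 := by linarith
  have hsqrt_pos : 0 < √(x + 1) := sqrt_pos.mpr hα
  rcases (mul_nonneg hx ht).eq_or_lt with hxt | hxt
  · have hγ : (2 * t + 1) ^ 2 * x + 1 = x + 1 := by linear_combination (-(4 * t + 4)) * hxt
    have hsqrt : √(√(x + 1) * √(x + 1) + (2 * t + 1) * x + 1) = √2 * √(x + 1) := by
      rw [mul_self_sqrt hα.le, ← sqrt_mul zero_le_two]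
      congr 1
      linear_combination (-2) * hxt
    rw [integral_one_div_one_add_mul_sq_cos_of_mul_eq_zero hxt.symm, hγ, hsqrt]
    field_simp
    rw [sq_sqrt hα.le, sq_sqrt zero_le_two]
    ring
  · have hsqrt : √(2 * √(x + 1) * √((2 * t + 1) ^ 2 * x + 1) + (2 + 2 * x * (2 * t + 1))) =
        √2 * √(√(x + 1) * √((2 * t + 1) ^ 2 * x + 1) + (2 * t + 1) * x + 1) := by
      rw [← sqrt_mul zero_le_two]
      ring_nf
    rw [integral_one_div_one_add_mul_sq_cos_of_mul_pos hx hxt, hsqrt]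
    field_simp
    ring
end

section
/- Let e₂, e₁ be real numbers with 0 < e₂ < e₁, and set z = e₂/e₁, η₀ = 17 - 12√2, a₀ = 3 + 2√2. Define v(x) = 3z²(1 - z²)·((x²/2 - (1+z²)/(6z²))² + (-z⁴ + 34z² - 1)/(36z⁴)). If z² > η₀, then for all x ∈ ℝ, v(x) ≥ (1 - z)·(z² - η₀) > 0. -/
/-! The quartic `-z⁴ + 34z² - 1` factors as `(z² - η₀)(a₀² - z²)` with `a₀² = 17 + 12√2`, so the
value of `v` at its minimum, `v_min = (1 - z²)(z² - η₀)(a₀² - z²) / (12z²)`, is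
`(1 - z)(z² - η₀)` times `(1 + z)(a₀² - z²) / (12z²)`, and for `0 < z < 1` that last factor exceeds
`a₀² - 1 > 12`. -/

open Real

lemma neg_quartic_eq_mul (z : ℝ) :
    -z ^ 4 + 34 * z ^ 2 - 1 = (z ^ 2 - (17 - 12 * √2)) * (17 + 12 * √2 - z ^ 2) := by
  linear_combination (-144 : ℝ) * sq_sqrt (show (0 : ℝ) ≤ 2 by norm_num)

lemma twelve_mul_sq_le {z : ℝ} (hz0 : 0 ≤ z) (hz1 : z ≤ 1) :
    12 * z ^ 2 ≤ (1 + z) * (17 + 12 * √2 - z ^ 2) := by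
  have hz2 : z ^ 2 ≤ 1 := pow_le_one₀ hz0 hz1
  nlinarith [sqrt_nonneg 2]

lemma sub_mul_le_min_value {z : ℝ} (hz0 : 0 < z) (hz1 : z < 1) (hη : 17 - 12 * √2 < z ^ 2) :
    (1 - z) * (z ^ 2 - (17 - 12 * √2)) ≤
      3 * z ^ 2 * (1 - z ^ 2) * ((-z ^ 4 + 34 * z ^ 2 - 1) / (36 * z ^ 4)) := by
  have hfactor : 3 * z ^ 2 * (1 - z ^ 2) * ((-z ^ 4 + 34 * z ^ 2 - 1) / (36 * z ^ 4)) =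
      (1 - z) * (z ^ 2 - (17 - 12 * √2)) * ((1 + z) * (17 + 12 * √2 - z ^ 2) / (12 * z ^ 2)) := by
    rw [neg_quartic_eq_mul]
    field_simp
    ring
  have hone : 1 ≤ (1 + z) * (17 + 12 * √2 - z ^ 2) / (12 * z ^ 2) := by
    rw [one_le_div (by positivity)]
    exact twelve_mul_sq_le hz0.le hz1.le
  rw [hfactor]
  exact le_mul_of_one_le_right (mul_nonneg (by linarith) (by linarith)) hone

lemma sub_mul_le_of_sq_gt {z : ℝ} (hz0 : 0 < z) (hz1 : z < 1) (hη : 17 - 12 * √2 < z ^ 2)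
    (x : ℝ) :
    (1 - z) * (z ^ 2 - (17 - 12 * √2)) ≤
      3 * z ^ 2 * (1 - z ^ 2) *
        ((x ^ 2 / 2 - (1 + z ^ 2) / (6 * z ^ 2)) ^ 2 + (-z ^ 4 + 34 * z ^ 2 - 1) / (36 * z ^ 4)) := by
  have hcoef : 0 ≤ 3 * z ^ 2 * (1 - z ^ 2) := by
    have : z ^ 2 < 1 := pow_lt_one₀ hz0.le hz1 two_ne_zero
    positivity
  calc (1 - z) * (z ^ 2 - (17 - 12 * √2))
      ≤ 3 * z ^ 2 * (1 - z ^ 2) * ((-z ^ 4 + 34 * z ^ 2 - 1) / (36 * z ^ 4)) :=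
        sub_mul_le_min_value hz0 hz1 hη
    _ ≤ _ := mul_le_mul_of_nonneg_left (le_add_of_nonneg_left (sq_nonneg _)) hcoef

/-- For 0 < e₂ < e₁, z = e₂/e₁, η₀ = 17 - 12√2: if z² > η₀ then
v(x) = 3z²(1-z²)((x²/2 - (1+z²)/(6z²))² + (-z⁴+34z²-1)/(36z⁴)) satisfies
v(x) ≥ (1-z)(z²-η₀) > 0 for all x. -/
theorem stmt_9 (e₁ e₂ : ℝ) (h2 : 0 < e₂) (h12 : e₂ < e₁)
    (hz : 17 - 12 * Real.sqrt 2 < (e₂ / e₁) ^ 2) :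
    (∀ x : ℝ,
      3 * (e₂ / e₁) ^ 2 * (1 - (e₂ / e₁) ^ 2) *
          ((x ^ 2 / 2 - (1 + (e₂ / e₁) ^ 2) / (6 * (e₂ / e₁) ^ 2)) ^ 2 +
            (-(e₂ / e₁) ^ 4 + 34 * (e₂ / e₁) ^ 2 - 1) / (36 * (e₂ / e₁) ^ 4))
        ≥ (1 - e₂ / e₁) * ((e₂ / e₁) ^ 2 - (17 - 12 * Real.sqrt 2))) ∧
      0 < (1 - e₂ / e₁) * ((e₂ / e₁) ^ 2 - (17 - 12 * Real.sqrt 2)) := by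
  have he₁ : 0 < e₁ := h2.trans h12
  have hz0 : 0 < e₂ / e₁ := div_pos h2 he₁
  have hz1 : e₂ / e₁ < 1 := (div_lt_one he₁).mpr h12
  exact ⟨sub_mul_le_of_sq_gt hz0 hz1 hz, mul_pos (by linarith) (by linarith)⟩
end

section
/- Let e_min > 0, b ≥ 1 an integer, U < 0 with |U| < 2·e_min/b, and suppose β_c > 0 satisfies 0 ≤ -2/|U| + b/(tanh(β_c·e_min/2)·e_min). Then β_c ≤ (2/e_min)·tanh⁻¹(b·|U|/(2·e_min)). -/
namespace Real

theorem tanh_strictMono : StrictMono tanh := by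
  refine fun x y hxy ↦ lt_of_not_ge fun hyx ↦ hxy.not_ge ?_
  have hmem (z : ℝ) : tanh z ∈ Set.Ioo (-1) 1 := ⟨neg_one_lt_tanh z, tanh_lt_one z⟩
  simpa only [artanh_tanh] using (artanh_le_artanh_iff (hmem y) (hmem x)).2 hyx

theorem tanh_pos {x : ℝ} (hx : 0 < x) : 0 < tanh x := by
  simpa only [tanh_zero] using tanh_strictMono hx

end Real

theorem le_mul_div_of_two_div_le_div {u e τ b : ℝ} (hu : 0 < u) (he : 0 < e) (hτ : 0 < τ)
    (h : 2 / u ≤ b / (τ * e)) : τ ≤ b * u / (2 * e) := by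
  rw [div_le_div_iff₀ hu (by positivity)] at h
  rw [le_div_iff₀ (by positivity)]
  linarith

theorem mul_div_lt_one_of_lt_div {u b c : ℝ} (hc : 0 < c) (hu : 0 ≤ u) (h : u < c / b) :
    b * u / c < 1 := by
  have hb : 0 < b := (div_pos_iff_of_pos_left hc).1 (hu.trans_lt h)
  rw [div_lt_one hc, ← lt_div_iff₀' hb]
  exact h

theorem stmt_14_general (artanh : ℝ → ℝ)
    (hartanh : ∀ x ∈ Set.Ioo (-1 : ℝ) 1, Real.tanh (artanh x) = x)
    (emin : ℝ) (he : 0 < emin) (b : ℕ) (U : ℝ) (hU : U < 0)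
    (hUe : |U| < 2 * emin / b) (βc : ℝ) (hβc : 0 < βc)
    (h : 0 ≤ -2 / |U| + (b : ℝ) / (Real.tanh (βc * emin / 2) * emin)) :
    βc ≤ (2 / emin) * artanh ((b : ℝ) * |U| / (2 * emin)) := by
  set x := (b : ℝ) * |U| / (2 * emin)
  have hx : x ∈ Set.Ioo (-1 : ℝ) 1 :=
    ⟨by linarith [show 0 ≤ x by positivity],
      mul_div_lt_one_of_lt_div (by positivity) (abs_nonneg U) hUe⟩
  have htanh : Real.tanh (βc * emin / 2) ≤ x := by
    rw [neg_div, neg_add_eq_sub, sub_nonneg] at h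
    exact le_mul_div_of_two_div_le_div (abs_pos.2 hU.ne) he (Real.tanh_pos (by positivity)) h
  have hβ : βc * emin / 2 ≤ artanh x :=
    Real.tanh_strictMono.le_iff_le.1 (htanh.trans_eq (hartanh x hx).symm)
  calc βc = 2 / emin * (βc * emin / 2) := by field_simp
    _ ≤ 2 / emin * artanh x := by gcongr

/-- With tanh⁻¹ the inverse hyperbolic tangent on (-1,1): if e_min > 0, b ≥ 1,
U < 0 with |U| < 2e_min/b, and β_c > 0 satisfies
0 ≤ -2/|U| + b/(tanh(β_c e_min/2) e_min), then β_c ≤ (2/e_min) tanh⁻¹(b|U|/(2e_min)). -/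
theorem stmt_14 (artanh : ℝ → ℝ)
    (hartanh : ∀ x ∈ Set.Ioo (-1 : ℝ) 1, Real.tanh (artanh x) = x)
    (emin : ℝ) (he : 0 < emin) (b : ℕ) (hb : 1 ≤ b) (U : ℝ) (hU : U < 0)
    (hUe : |U| < 2 * emin / b) (βc : ℝ) (hβc : 0 < βc)
    (h : 0 ≤ -2 / |U| + (b : ℝ) / (Real.tanh (βc * emin / 2) * emin)) :
    βc ≤ (2 / emin) * artanh ((b : ℝ) * |U| / (2 * emin)) :=
  stmt_14_general artanh hartanh emin he b U hU hUe βc hβc h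
end

section
/- Let 0 < e_min ≤ e_max, 0 < β ≤ 2/e_min, and y ∈ ℝ with y + cosh(β·e_min) > 0. Then y + cosh(β·e_max) ≤ 2·(e_max/e_min)²·cosh(2·e_max/e_min)·(y + cosh(β·e_min)). -/
/-!
Write `cosh x - 1 = 2 sinh² (x / 2)` and sandwich `sinh` between `|t| ≤ |sinh t| ≤ |t| cosh t`
(the upper bound is the mean value theorem). This gives
`x² / 2 ≤ cosh x - 1 ≤ x² cosh x`, so rescaling the argument `a = β e_min` by
`r = e_max / e_min` multiplies `cosh a - 1` by at most `2 r² cosh (r a)`, and `r a ≤ 2 e_max / e_min`.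
The constant in front is at least `1`, which absorbs the nonnegative part `y + 1`.
-/

open Real Metric

namespace Real

lemma abs_sinh_le_abs_mul_cosh (x : ℝ) : |sinh x| ≤ |x| * cosh x := by
  have bound : ∀ z ∈ closedBall (0 : ℝ) |x|, ‖cosh z‖ ≤ cosh x := fun z hz => by
    rw [norm_eq_abs, abs_of_pos (cosh_pos z), cosh_le_cosh]
    simpa using hz
  have h := (convex_closedBall (0 : ℝ) |x|).norm_image_sub_le_of_norm_hasDerivWithin_le
    (fun z _ => (hasDerivAt_sinh z).hasDerivWithinAt) bound
    (mem_closedBall_self (abs_nonneg x)) (by simp : x ∈ closedBall (0 : ℝ) |x|)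
  simpa [mul_comm] using h

lemma abs_le_abs_sinh (x : ℝ) : |x| ≤ |sinh x| := by
  rw [abs_sinh]
  exact self_le_sinh_iff.2 (abs_nonneg x)

lemma cosh_sub_one_eq_two_mul_sinh_half_sq (x : ℝ) : cosh x - 1 = 2 * sinh (x / 2) ^ 2 := by
  have h := cosh_two_mul (x / 2)
  rw [mul_div_cancel₀ x two_ne_zero] at h
  rw [h, cosh_sq]
  ring

lemma sq_div_two_le_cosh_sub_one (x : ℝ) : x ^ 2 / 2 ≤ cosh x - 1 := by
  have h : (x / 2) ^ 2 ≤ sinh (x / 2) ^ 2 := sq_le_sq.2 (abs_le_abs_sinh _)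
  rw [cosh_sub_one_eq_two_mul_sinh_half_sq]
  linarith

lemma cosh_sub_one_le_sq_mul_cosh (x : ℝ) : cosh x - 1 ≤ x ^ 2 * cosh x := by
  have hsinh : sinh (x / 2) ^ 2 ≤ (x / 2) ^ 2 * cosh (x / 2) ^ 2 := by
    rw [← mul_pow, sq_le_sq, abs_mul, abs_of_pos (cosh_pos _)]
    exact abs_sinh_le_abs_mul_cosh _
  have hcosh : cosh (x / 2) ^ 2 = (cosh x + 1) / 2 := by
    linarith [cosh_sq (x / 2), cosh_sub_one_eq_two_mul_sinh_half_sq x]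
  calc cosh x - 1 = 2 * sinh (x / 2) ^ 2 := cosh_sub_one_eq_two_mul_sinh_half_sq x
    _ ≤ 2 * ((x / 2) ^ 2 * ((cosh x + 1) / 2)) := by rw [← hcosh]; gcongr
    _ ≤ x ^ 2 * cosh x := by nlinarith [sq_nonneg x, one_le_cosh x]

lemma cosh_mul_sub_one_le {r a K : ℝ} (h : |r * a| ≤ |K|) :
    cosh (r * a) - 1 ≤ 2 * r ^ 2 * cosh K * (cosh a - 1) :=
  calc cosh (r * a) - 1 ≤ (r * a) ^ 2 * cosh (r * a) := cosh_sub_one_le_sq_mul_cosh _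
    _ ≤ (r * a) ^ 2 * cosh K := by gcongr; exact cosh_le_cosh.2 h
    _ = 2 * r ^ 2 * cosh K * (a ^ 2 / 2) := by ring
    _ ≤ 2 * r ^ 2 * cosh K * (cosh a - 1) := by gcongr; exact sq_div_two_le_cosh_sub_one a

end Real

theorem stmt_16_general (emin emax β y : ℝ) (h1 : 0 < emin) (h2 : emin ≤ emax)
    (h3 : 0 < β) (h4 : β ≤ 2 / emin) (hy : -1 ≤ y) :
    y + Real.cosh (β * emax) ≤
      2 * (emax / emin) ^ 2 * Real.cosh (2 * emax / emin) * (y + Real.cosh (β * emin)) := by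
  set C := 2 * (emax / emin) ^ 2 * cosh (2 * emax / emin)
  have hrescale : β * emax = emax / emin * (β * emin) := by field_simp
  have harg : |emax / emin * (β * emin)| ≤ |2 * emax / emin| := by
    have hemax : 0 ≤ emax := h1.le.trans h2
    rw [← hrescale, abs_of_nonneg (by positivity), abs_of_nonneg (by positivity)]
    calc β * emax ≤ 2 / emin * emax := mul_le_mul_of_nonneg_right h4 hemax
      _ = 2 * emax / emin := by ring
  have hcosh : cosh (β * emax) - 1 ≤ C * (cosh (β * emin) - 1) :=
    hrescale ▸ cosh_mul_sub_one_le harg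
  have hC : 1 ≤ C := by
    have hr : 1 ≤ (emax / emin) ^ 2 := one_le_pow₀ ((one_le_div h1).2 h2)
    nlinarith [one_le_cosh (2 * emax / emin)]
  calc y + cosh (β * emax) = (y + 1) + (cosh (β * emax) - 1) := by ring
    _ ≤ C * (y + 1) + C * (cosh (β * emin) - 1) :=
        add_le_add (le_mul_of_one_le_left (by linarith) hC) hcosh
    _ = C * (y + cosh (β * emin)) := by ring

/-- For 0 < e_min ≤ e_max, 0 < β ≤ 2/e_min, and y ≥ -1 with y + cosh(β e_min) > 0:
y + cosh(β e_max) ≤ 2(e_max/e_min)² cosh(2 e_max/e_min)(y + cosh(β e_min)). -/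
theorem stmt_16 (emin emax β y : ℝ) (h1 : 0 < emin) (h2 : emin ≤ emax)
    (h3 : 0 < β) (h4 : β ≤ 2 / emin) (hy : -1 ≤ y)
    (hy' : 0 < y + Real.cosh (β * emin)) :
    y + Real.cosh (β * emax) ≤
      2 * (emax / emin) ^ 2 * Real.cosh (2 * emax / emin) * (y + Real.cosh (β * emin)) :=
  stmt_16_general emin emax β y h1 h2 h3 h4 hy
end

section
/- Let h > 0, β > 0 with h·β/2 ∈ ℕ (h = 2m/β for some positive integer m), and let z ∈ ℂ with |z| = π·h. Then |1 + e^{βz}| ≥ 1 - e^{-π/2}. -/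
/-!
Put `w = βz`, so that `‖w‖ = 2πm`. If `|Re w| ≥ π/2`, then `|e^w|` is either at most `e^{-π/2}`
or at least `e^{π/2} ≥ 2`, and the triangle inequality gives the bound. Otherwise
`|Im w| ∈ [2πm - π/2, 2πm]`, so `cos (Im w) ≥ 0` and `Re (1 + e^w) ≥ 1`.
-/

open Real

theorem Real.cos_nonneg_of_abs_sub_int_mul_two_pi_le {x : ℝ} (k : ℤ)
    (hx : |x - k * (2 * π)| ≤ π / 2) : 0 ≤ cos x := by
  rw [← cos_sub_int_mul_two_pi x k]
  exact cos_nonneg_of_mem_Icc (abs_le.mp hx)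

namespace Complex

theorem cos_im_nonneg_of_norm_eq_int_mul_two_pi {w : ℂ} (k : ℤ) (hw : ‖w‖ = k * (2 * π))
    (hre : |w.re| ≤ π / 2) : 0 ≤ Real.cos w.im := by
  rw [← Real.cos_abs]
  refine Real.cos_nonneg_of_abs_sub_int_mul_two_pi_le k (abs_le.mpr ⟨?_, ?_⟩)
  · linarith [norm_le_abs_re_add_abs_im w]
  · linarith [abs_im_le_norm w, pi_pos]

theorem one_le_norm_one_add_exp_of_cos_im_nonneg {w : ℂ} (h : 0 ≤ Real.cos w.im) :
    1 ≤ ‖1 + exp w‖ := by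
  have hre : 1 ≤ (1 + exp w).re := by
    rw [add_re, one_re, exp_re]
    linarith [mul_nonneg (Real.exp_pos w.re).le h]
  exact hre.trans (re_le_norm _)

theorem one_sub_exp_neg_pi_div_two_le_norm_one_add_exp {w : ℂ} (k : ℤ)
    (hw : ‖w‖ = k * (2 * π)) : 1 - Real.exp (-π / 2) ≤ ‖1 + exp w‖ := by
  have hexp_pos := Real.exp_pos (-π / 2)
  rcases le_or_gt w.re (-(π / 2)) with hneg | hre_lower
  · have hsmall : ‖exp w‖ ≤ Real.exp (-π / 2) := by
      rw [norm_exp]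
      exact Real.exp_le_exp.mpr (by linarith)
    calc 1 - Real.exp (-π / 2) ≤ ‖(1 : ℂ)‖ - ‖-exp w‖ := by
          rw [norm_one, norm_neg]; linarith
      _ ≤ ‖1 + exp w‖ := by simpa using norm_sub_norm_le (1 : ℂ) (-exp w)
  refine le_trans (by linarith) (?_ : 1 ≤ ‖1 + exp w‖)
  rcases le_or_gt (π / 2) w.re with hpos | hre_upper
  · have hlarge : 2 ≤ ‖exp w‖ := by
      rw [norm_exp]
      linarith [Real.add_one_le_exp w.re, pi_gt_three]
    calc (1 : ℝ) ≤ ‖exp w‖ - ‖(-1 : ℂ)‖ := by rw [norm_neg, norm_one]; linarith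
      _ ≤ ‖1 + exp w‖ := by simpa [add_comm] using norm_sub_norm_le (exp w) (-1)
  · exact one_le_norm_one_add_exp_of_cos_im_nonneg
      (cos_im_nonneg_of_norm_eq_int_mul_two_pi k hw (abs_le.mpr ⟨hre_lower.le, hre_upper.le⟩))

end Complex

theorem stmt_19_general (h β : ℝ) (hβ : 0 < β)
    (hm : ∃ m : ℕ, 0 < m ∧ h = 2 * (m : ℝ) / β)
    (z : ℂ) (hz : ‖z‖ = Real.pi * h) :
    1 - Real.exp (-Real.pi / 2) ≤ ‖1 + Complex.exp ((β : ℂ) * z)‖ := by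
  obtain ⟨m, -, rfl⟩ := hm
  refine Complex.one_sub_exp_neg_pi_div_two_le_norm_one_add_exp m ?_
  rw [norm_mul, hz, Complex.norm_real, Real.norm_of_nonneg hβ.le]
  push_cast
  field_simp

/-- For h, β > 0 with hβ/2 a positive integer and z ∈ ℂ with |z| = πh:
|1 + e^{βz}| ≥ 1 - e^{-π/2}. -/
theorem stmt_19 (h β : ℝ) (hh : 0 < h) (hβ : 0 < β)
    (hm : ∃ m : ℕ, 0 < m ∧ h = 2 * (m : ℝ) / β)
    (z : ℂ) (hz : ‖z‖ = Real.pi * h) :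
    1 - Real.exp (-Real.pi / 2) ≤ ‖1 + Complex.exp ((β : ℂ) * z)‖ :=
  stmt_19_general h β hβ hm z hz
end
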